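/- arXiv:2501.07652 — 2 statements merged into one kernel-verified Lean document; each statement's English description precedes it below -/
import Mathlib

section
/- Let p ≥ 1 and L ≥ 1, and let v_0, v_1, …, v_L be independent random vectors in ℝ^p on a common probability space, each of which is zero-mean and isotropic. Set v̄_i := (1, v_iᵀ)ᵀ ∈ ℝ^{p+1} and define ũ := (v_0ᵀ, v_1ᵀ, (v̄_1 ⊗ v_2)ᵀ, (v̄_1 ⊗ v̄_2 ⊗ v_3)ᵀ, …, (v̄_1 ⊗ v̄_2 ⊗ ⋯ ⊗ v̄_{L−1} ⊗ v_L)ᵀ)ᵀ ∈ ℝ^{d_ũ}, with d_ũ := (p+1)^L + p − 1. Then E[ũũᵀ] = I_{d_ũ}; equivalently, E[(ũᵀw)²] = ‖w‖²₂ for every w ∈ ℝ^{d_ũ}. -/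
open MeasureTheory ProbabilityTheory Real
open scoped ENNReal RealInnerProductSpace BigOperators

def Isotropic {Ω : Type*} [MeasurableSpace Ω] {p : ℕ}
    (u : Ω → EuclideanSpace ℝ (Fin p)) (μ : Measure Ω) : Prop :=
  ∀ x : EuclideanSpace ℝ (Fin p), (∫ ω, ⟪u ω, x⟫ ^ 2 ∂μ) = ‖x‖ ^ 2

def Hypercontractive {Ω : Type*} [MeasurableSpace Ω] {p : ℕ} (γ : ℝ)
    (u : Ω → EuclideanSpace ℝ (Fin p)) (μ : Measure Ω) : Prop :=
  ∀ x : EuclideanSpace ℝ (Fin p),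
    (∫ ω, ⟪u ω, x⟫ ^ 4 ∂μ) ≤ γ * (∫ ω, ⟪u ω, x⟫ ^ 2 ∂μ) ^ 2

def ZeroThirdMoment {Ω : Type*} [MeasurableSpace Ω] {p : ℕ}
    (u : Ω → EuclideanSpace ℝ (Fin p)) (μ : Measure Ω) : Prop :=
  ∀ x : EuclideanSpace ℝ (Fin p), (∫ ω, ⟪u ω, x⟫ ^ 3 ∂μ) = 0

/-- `ū = (1, uᵀ)ᵀ ∈ ℝ^{p+1}`. -/
noncomputable def baru {p : ℕ} (u : EuclideanSpace ℝ (Fin p)) : Fin (p + 1) → ℝ :=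
  Fin.cons 1 (fun i => u i)

/-- index type for the covariate vector `ũ`, of cardinality `(p+1)^L + p − 1`:
`Sum.inl` indexes the block `v_0`, and `Sum.inr ⟨ℓ, is, j⟩` indexes the entry of the
block `v̄_1 ⊗ ⋯ ⊗ v̄_ℓ ⊗ v_{ℓ+1}` with multi-index `(is, j)` (`ℓ = 0, …, L−1`). -/
abbrev CovIdx (p L : ℕ) := Fin p ⊕ (Σ ℓ : Fin L, (Fin ℓ.val → Fin (p + 1)) × Fin p)

/-- the covariate vector
`ũ = (v_0ᵀ, v_1ᵀ, (v̄_1⊗v_2)ᵀ, …, (v̄_1⊗⋯⊗v̄_{L−1}⊗v_L)ᵀ)ᵀ ∈ ℝ^{d_ũ}`. -/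
noncomputable def covariate {p : ℕ} (L : ℕ) (v : ℕ → EuclideanSpace ℝ (Fin p)) :
    EuclideanSpace ℝ (CovIdx p L) :=
  WithLp.toLp 2 fun c =>
    match c with
    | Sum.inl j => v 0 j
    | Sum.inr ⟨ℓ, is, j⟩ =>
        (∏ s : Fin ℓ.val, baru (v (s.val + 1)) (is s)) * v (ℓ.val + 1) j

/-!
Every coordinate of `ũ` is a product `∏_{t=0}^{L} (v̄_t)_{k_t}` of one coordinate of each
`v̄_t = (1, v_t)`, and distinct coordinates of `ũ` have distinct index strings `(k_0, …, k_L)`.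
Isotropy and zero mean give `E[v̄_t v̄_tᵀ] = I`, so by independence
`E[ũ_a ũ_b] = ∏_t δ(k_t(a), k_t(b)) = δ_{ab}`; the quadratic form is then `‖w‖²` by expanding
`⟪ũ, w⟫²`.
-/

section SecondMoments

variable {Ω : Type*} [MeasurableSpace Ω] {μ : Measure Ω}

lemma memLp_two_of_integral_sq_ne_zero {f : Ω → ℝ} (hf : AEStronglyMeasurable f μ)
    (h : ∫ ω, f ω ^ 2 ∂μ ≠ 0) : MemLp f 2 μ :=
  (memLp_two_iff_integrable_sq hf).2 (Integrable.of_integral_ne_zero h)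

lemma integral_inner_sq_of_secondMoment_eq_one {ι : Type*} [Fintype ι] [DecidableEq ι]
    {X : Ω → EuclideanSpace ℝ ι} (hX : ∀ a, AEStronglyMeasurable (fun ω => X ω a) μ)
    (hmom : Matrix.of (fun a b => ∫ ω, X ω a * X ω b ∂μ) = 1) (w : EuclideanSpace ℝ ι) :
    ∫ ω, ⟪X ω, w⟫ ^ 2 ∂μ = ‖w‖ ^ 2 := by
  have hmom' : ∀ a b, ∫ ω, X ω a * X ω b ∂μ = if a = b then 1 else 0 := fun a b => by
    simpa [Matrix.one_apply] using congrFun (congrFun hmom a) b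
  have hL2 : ∀ a, MemLp (fun ω => X ω a) 2 μ := fun a =>
    memLp_two_of_integral_sq_ne_zero (hX a) (by simp [sq, hmom'])
  have hint : ∀ a b, Integrable (fun ω => w a * w b * (X ω a * X ω b)) μ := fun a b =>
    ((hL2 a).integrable_mul (hL2 b)).const_mul _
  calc ∫ ω, ⟪X ω, w⟫ ^ 2 ∂μ
      = ∫ ω, ∑ a, ∑ b, w a * w b * (X ω a * X ω b) ∂μ := by
        congr 1 with ω
        rw [PiLp.inner_apply, sq, Finset.sum_mul_sum]
        exact Finset.sum_congr rfl fun a _ => Finset.sum_congr rfl fun b _ => by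
          simp only [RCLike.inner_apply, conj_trivial]
          ring
    _ = ∑ a, ∑ b, w a * w b * ∫ ω, X ω a * X ω b ∂μ := by
        rw [integral_finsetSum _ fun a _ => integrable_finsetSum _ fun b _ => hint a b]
        simp_rw [integral_finsetSum _ fun b _ => hint _ b, integral_const_mul]
    _ = ‖w‖ ^ 2 := by
        rw [EuclideanSpace.norm_sq_eq]
        simp [hmom', sq]

variable {p : ℕ} {u : Ω → EuclideanSpace ℝ (Fin p)}

namespace Isotropic

lemma memLp_inner (hu : AEStronglyMeasurable u μ) (hiso : Isotropic u μ)
    (x : EuclideanSpace ℝ (Fin p)) : MemLp (fun ω => ⟪u ω, x⟫) 2 μ := by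
  rcases eq_or_ne x 0 with rfl | hx
  · simp
  · exact memLp_two_of_integral_sq_ne_zero (hu.inner aestronglyMeasurable_const)
      (by rw [hiso x]; positivity)

lemma integral_inner_mul_inner (hu : AEStronglyMeasurable u μ) (hiso : Isotropic u μ)
    (x y : EuclideanSpace ℝ (Fin p)) : ∫ ω, ⟪u ω, x⟫ * ⟪u ω, y⟫ ∂μ = ⟪x, y⟫ := by
  have polarization : ∀ ω, ⟪u ω, x⟫ * ⟪u ω, y⟫ = (⟪u ω, x + y⟫ ^ 2 - ⟪u ω, x - y⟫ ^ 2) / 4 := by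
    intro ω; rw [inner_add_right, inner_sub_right]; ring
  simp_rw [polarization]
  rw [integral_div, integral_sub ((hiso.memLp_inner hu _).integrable_sq)
    ((hiso.memLp_inner hu _).integrable_sq), hiso, hiso, norm_add_sq_real, norm_sub_sq_real]
  ring

lemma memLp_apply (hu : AEStronglyMeasurable u μ) (hiso : Isotropic u μ) (i : Fin p) :
    MemLp (fun ω => u ω i) 2 μ := by
  simpa [EuclideanSpace.inner_single_right] using hiso.memLp_inner hu (EuclideanSpace.single i 1)

lemma integral_apply_mul_apply (hu : AEStronglyMeasurable u μ) (hiso : Isotropic u μ)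
    (i j : Fin p) : ∫ ω, u ω i * u ω j ∂μ = if i = j then 1 else 0 := by
  simpa [EuclideanSpace.inner_single_right, PiLp.single_apply, eq_comm] using
    hiso.integral_inner_mul_inner hu (EuclideanSpace.single i 1) (EuclideanSpace.single j 1)

lemma integral_apply_eq_zero [IsFiniteMeasure μ] (hu : AEStronglyMeasurable u μ)
    (hiso : Isotropic u μ) (hmean : ∫ ω, u ω ∂μ = 0) (i : Fin p) : ∫ ω, u ω i ∂μ = 0 := by
  rw [← eval_integral_piLp (fun j => (hiso.memLp_apply hu j).integrable one_le_two), hmean]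
  rfl

lemma integral_baru_mul_baru [IsProbabilityMeasure μ] (hu : AEStronglyMeasurable u μ)
    (hiso : Isotropic u μ) (hmean : ∫ ω, u ω ∂μ = 0) (k k' : Fin (p + 1)) :
    ∫ ω, baru (u ω) k * baru (u ω) k' ∂μ = if k = k' then 1 else 0 := by
  cases k using Fin.cases <;> cases k' using Fin.cases <;>
    simp [baru, hiso.integral_apply_eq_zero hu hmean, hiso.integral_apply_mul_apply hu,
      Fin.succ_ne_zero, eq_comm (a := (0 : Fin (p + 1)))]

end Isotropic

end SecondMoments

namespace CovIdx

-- `a.digit t` is the index `k_t` of the coordinate of `v̄_t` entering `ũ_a`; the block `v_0`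
-- is read as `v̄_0` at a nonzero index, and a factor with index `0` is the constant `1`.
def digit {p L : ℕ} : CovIdx p L → ℕ → Fin (p + 1)
  | Sum.inl i, t => if t = 0 then i.succ else 0
  | Sum.inr ⟨ℓ, is, j⟩, t =>
      if h : 1 ≤ t ∧ t ≤ ℓ.val then is ⟨t - 1, by omega⟩
      else if t = ℓ.val + 1 then j.succ else 0

variable {p L : ℕ}

lemma digit_inl_zero (i : Fin p) : digit (Sum.inl i : CovIdx p L) 0 = i.succ := rfl

lemma digit_inl_of_ne_zero (i : Fin p) {t : ℕ} (ht : t ≠ 0) :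
    digit (Sum.inl i : CovIdx p L) t = 0 := if_neg ht

lemma digit_inr_val_succ (ℓ : Fin L) (is : Fin ℓ.val → Fin (p + 1)) (j : Fin p) (s : Fin ℓ.val) :
    digit (Sum.inr ⟨ℓ, is, j⟩ : CovIdx p L) (s.val + 1) = is s := by
  simp [digit]

lemma digit_inr_succ (ℓ : Fin L) (is : Fin ℓ.val → Fin (p + 1)) (j : Fin p) :
    digit (Sum.inr ⟨ℓ, is, j⟩ : CovIdx p L) (ℓ.val + 1) = j.succ := by
  simp [digit]

lemma digit_inr_eq_zero (ℓ : Fin L) (is : Fin ℓ.val → Fin (p + 1)) (j : Fin p) {t : ℕ}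
    (ht : t = 0 ∨ ℓ.val + 1 < t) : digit (Sum.inr ⟨ℓ, is, j⟩ : CovIdx p L) t = 0 := by
  simp only [digit]
  rw [dif_neg (by omega), if_neg (by omega)]

lemma le_of_digit_inr_eq {ℓ ℓ' : Fin L} {is : Fin ℓ.val → Fin (p + 1)}
    {is' : Fin ℓ'.val → Fin (p + 1)} {j j' : Fin p}
    (h : ∀ t ≤ L, digit (Sum.inr ⟨ℓ, is, j⟩ : CovIdx p L) t = digit (Sum.inr ⟨ℓ', is', j'⟩) t) :
    ℓ'.val ≤ ℓ.val := by
  by_contra! hlt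
  have := h (ℓ'.val + 1) ℓ'.isLt
  rw [digit_inr_eq_zero ℓ is j (Or.inr (by omega)), digit_inr_succ] at this
  exact Fin.succ_ne_zero j' this.symm

lemma digit_injective :
    Function.Injective fun (a : CovIdx p L) (t : Fin (L + 1)) => a.digit t := by
  intro a b hab
  have h : ∀ t ≤ L, a.digit t = b.digit t := fun t ht => congrFun hab ⟨t, by omega⟩
  rcases a with i | ⟨ℓ, is, j⟩ <;> rcases b with i' | ⟨ℓ', is', j'⟩
  · simpa [digit_inl_zero] using h 0 (Nat.zero_le _)
  · have := h 0 (Nat.zero_le _)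
    rw [digit_inl_zero, digit_inr_eq_zero ℓ' is' j' (Or.inl rfl)] at this
    exact absurd this (Fin.succ_ne_zero i)
  · have := h 0 (Nat.zero_le _)
    rw [digit_inl_zero, digit_inr_eq_zero ℓ is j (Or.inl rfl)] at this
    exact absurd this.symm (Fin.succ_ne_zero i')
  · obtain rfl : ℓ = ℓ' :=
      Fin.ext (le_antisymm (le_of_digit_inr_eq fun t ht => (h t ht).symm) (le_of_digit_inr_eq h))
    have hj : j = j' := by simpa [digit_inr_succ] using h (ℓ.val + 1) ℓ.isLt
    have his : is = is' := funext fun s => by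
      simpa [digit_inr_val_succ] using h (s.val + 1) (by omega)
    rw [hj, his]

end CovIdx

open CovIdx in
lemma covariate_apply_eq_prod {p : ℕ} (L : ℕ) (v : ℕ → EuclideanSpace ℝ (Fin p))
    (a : CovIdx p L) : covariate L v a = ∏ t ∈ Finset.range (L + 1), baru (v t) (a.digit t) := by
  rcases a with i | ⟨ℓ, is, j⟩
  · rw [Finset.prod_eq_single_of_mem 0 (by simp)
      fun t _ ht => by rw [digit_inl_of_ne_zero i ht]; rfl]
    rfl
  · have hℓ := ℓ.isLt
    rw [← Finset.prod_subset (Finset.range_subset_range.2 (show ℓ.val + 2 ≤ L + 1 by omega))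
        fun t _ ht => by rw [digit_inr_eq_zero ℓ is j (by simp at ht; omega)]; rfl,
      Finset.prod_range_succ, Finset.prod_range_succ', digit_inr_succ,
      digit_inr_eq_zero ℓ is j (Or.inl rfl),
      ← Fin.prod_univ_eq_prod_range (fun s => baru (v (s + 1)) (digit _ (s + 1)))]
    simp only [digit_inr_val_succ, baru, Fin.cons_zero, Fin.cons_succ, mul_one]
    rfl

lemma measurable_baru_apply {p : ℕ} (k : Fin (p + 1)) :
    Measurable fun x : EuclideanSpace ℝ (Fin p) => baru x k := by
  cases k using Fin.cases with
  | zero => exact measurable_const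
  | succ i => exact (measurable_pi_apply i).comp (WithLp.measurable_ofLp 2 _)

theorem integral_covariate_mul_covariate {Ω : Type*} [MeasurableSpace Ω] {μ : Measure Ω}
    [IsProbabilityMeasure μ] {p L : ℕ} {v : ℕ → Ω → EuclideanSpace ℝ (Fin p)}
    (hmeas : ∀ s, s ≤ L → Measurable (v s))
    (hindep : iIndepFun (fun t : Fin (L + 1) => v t.val) μ)
    (hmean : ∀ s, s ≤ L → ∫ ω, v s ω ∂μ = 0)
    (hiso : ∀ s, s ≤ L → Isotropic (v s) μ) (a b : CovIdx p L) :
    ∫ ω, covariate L (fun s => v s ω) a * covariate L (fun s => v s ω) b ∂μ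
      = if a = b then 1 else 0 := by
  have hL : ∀ t : Fin (L + 1), t.val ≤ L := fun t => Nat.lt_succ_iff.1 t.isLt
  have hfactor : ∀ ω, covariate L (fun s => v s ω) a * covariate L (fun s => v s ω) b
      = ∏ t : Fin (L + 1), baru (v t ω) (a.digit t) * baru (v t ω) (b.digit t) := fun ω => by
    rw [covariate_apply_eq_prod, covariate_apply_eq_prod, ← Finset.prod_mul_distrib,
      Fin.prod_univ_eq_prod_range (fun t => baru (v t ω) (a.digit t) * baru (v t ω) (b.digit t))]
  simp_rw [hfactor]
  rw [hindep.integral_fun_prod_comp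
    (f := fun (t : Fin (L + 1)) x => baru x (a.digit t) * baru x (b.digit t))
    (fun t => (hmeas t (hL t)).aemeasurable)
    (fun t => ((measurable_baru_apply _).mul (measurable_baru_apply _)).aestronglyMeasurable)]
  simp_rw [fun t : Fin (L + 1) => (hiso t (hL t)).integral_baru_mul_baru
    (hmeas t (hL t)).aestronglyMeasurable (hmean t (hL t))]
  split_ifs with hab
  · simp [hab]
  · obtain ⟨t, ht⟩ := Function.ne_iff.1 (CovIdx.digit_injective.ne hab)
    exact Finset.prod_eq_zero (Finset.mem_univ t) (if_neg ht)

lemma measurable_covariate_apply {Ω : Type*} [MeasurableSpace Ω] {p L : ℕ}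
    {v : ℕ → Ω → EuclideanSpace ℝ (Fin p)} (hmeas : ∀ s, s ≤ L → Measurable (v s))
    (a : CovIdx p L) : Measurable fun ω => covariate L (fun s => v s ω) a := by
  simp_rw [covariate_apply_eq_prod]
  exact Finset.measurable_prod _ fun t ht =>
    (measurable_baru_apply _).comp (hmeas t (Nat.lt_succ_iff.1 (Finset.mem_range.1 ht)))

theorem covariate_isotropic_general {Ω : Type*} [MeasurableSpace Ω]
    (μ : Measure Ω) [IsProbabilityMeasure μ]
    (p L : ℕ)
    (v : ℕ → Ω → EuclideanSpace ℝ (Fin p))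
    (hmeas : ∀ s, s ≤ L → Measurable (v s))
    (hindep : iIndepFun (m := fun _ : Fin (L + 1) =>
      (inferInstance : MeasurableSpace (EuclideanSpace ℝ (Fin p))))
      (fun s : Fin (L + 1) => v s.val) μ)
    (hmean : ∀ s, s ≤ L → (∫ ω, v s ω ∂μ) = 0)
    (hiso : ∀ s, s ≤ L → Isotropic (v s) μ) :
    (Matrix.of fun a b : CovIdx p L =>
        ∫ ω, covariate L (fun s => v s ω) a * covariate L (fun s => v s ω) b ∂μ)
      = (1 : Matrix (CovIdx p L) (CovIdx p L) ℝ) ∧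
    ∀ w : EuclideanSpace ℝ (CovIdx p L),
      (∫ ω, ⟪covariate L (fun s => v s ω), w⟫ ^ 2 ∂μ) = ‖w‖ ^ 2 := by
  have hmom : (Matrix.of fun a b : CovIdx p L =>
      ∫ ω, covariate L (fun s => v s ω) a * covariate L (fun s => v s ω) b ∂μ) = 1 :=
    Matrix.ext fun a b => by
      simpa [Matrix.one_apply] using integral_covariate_mul_covariate hmeas hindep hmean hiso a b
  exact ⟨hmom, integral_inner_sq_of_secondMoment_eq_one
    (fun a => (measurable_covariate_apply hmeas a).aestronglyMeasurable) hmom⟩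

/-- isotropy of the covariates: if `v_0, …, v_L` are independent,
zero-mean and isotropic, then `E[ũũᵀ] = I`; equivalently `E[(ũᵀw)²] = ‖w‖²` for all `w`. -/
theorem covariate_isotropic {Ω : Type*} [MeasurableSpace Ω]
    (μ : Measure Ω) [IsProbabilityMeasure μ]
    (p L : ℕ) (hp : 1 ≤ p) (hL : 1 ≤ L)
    (v : ℕ → Ω → EuclideanSpace ℝ (Fin p))
    (hmeas : ∀ s, s ≤ L → Measurable (v s))
    (hindep : iIndepFun (m := fun _ : Fin (L + 1) =>
      (inferInstance : MeasurableSpace (EuclideanSpace ℝ (Fin p))))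
      (fun s : Fin (L + 1) => v s.val) μ)
    (hmean : ∀ s, s ≤ L → (∫ ω, v s ω ∂μ) = 0)
    (hiso : ∀ s, s ≤ L → Isotropic (v s) μ) :
    (Matrix.of fun a b : CovIdx p L =>
        ∫ ω, covariate L (fun s => v s ω) a * covariate L (fun s => v s ω) b ∂μ)
      = (1 : Matrix (CovIdx p L) (CovIdx p L) ℝ) ∧
    ∀ w : EuclideanSpace ℝ (CovIdx p L),
      (∫ ω, ⟪covariate L (fun s => v s ω), w⟫ ^ 2 ∂μ) = ‖w‖ ^ 2 :=
  covariate_isotropic_general μ p L v hmeas hindep hmean hiso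
end

section
/- Let p ≥ 1, k ≥ 1 and γ > 0, and let v_1, …, v_k be independent random vectors in ℝ^p on a common probability space, each of which is zero-mean, isotropic, (4,2,γ)-hypercontractive, and has zero third moment marginals. Set v̄_s := (1, v_sᵀ)ᵀ ∈ ℝ^{p+1} and let b_k := v̄_1 ⊗ v̄_2 ⊗ ⋯ ⊗ v̄_{k−1} ⊗ v_k ∈ ℝ^{p(p+1)^{k−1}} (for k = 1, b_1 := v_1). Then for every q ∈ ℝ^{p(p+1)^{k−1}}: E[(qᵀb_k)⁴] ≤ (max(3,γ))^k · ‖q‖⁴₂. -/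
/-!
Write `v̄ = (1, v)` and `z = (a, t)`. Zero mean and zero third moments kill the odd terms of
`E[(zᵀv̄)⁴] = E[(a + tᵀv)⁴]`, leaving `a⁴ + 6a²‖t‖² + E[(tᵀv)⁴] ≤ max(3,γ)‖z‖⁴`, while Jensen
gives `E[(zᵀv̄)⁴] ≥ (E[(zᵀv̄)²])² = ‖z‖⁴`.

The block `b_k` consists of the entries of `v̄_1 ⊗ ⋯ ⊗ v̄_k` whose last index is not the constant
coordinate, so `qᵀb_k = q̃ᵀ(v̄_1 ⊗ ⋯ ⊗ v̄_k)` with `q̃` the extension of `q` by zeros. Such bounds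
multiply over tensor products of independent factors: splitting off the first factor,
`Qᵀ(w ⊗ W) = Σᵢ wᵢ Zᵢ(W)`, so conditioning on `W` gives `E[(Qᵀ(w ⊗ W))⁴] ≤ M E[(Σᵢ Zᵢ²)²]`,
and Minkowski's inequality in `L²` with induction bounds this by `M · M^(n-1) ‖Q‖⁴`.

Fourth moments may be infinite, so they are taken as lower Lebesgue integrals and the upper bounds
are proved under finiteness; the lower bound passes finiteness down to the factors, and an
infinite moment makes the Bochner integral in the claim zero.
-/

open MeasureTheory ProbabilityTheory Real
open scoped ENNReal RealInnerProductSpace BigOperators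

/-- the block `b_k = v̄_1 ⊗ ⋯ ⊗ v̄_{k−1} ⊗ v_k ∈ ℝ^{p(p+1)^{k−1}}` (`b_1 = v_1`),
indexed by `(Fin (k−1) → Fin (p+1)) × Fin p`. -/
noncomputable def blockVec {p : ℕ} (v : ℕ → EuclideanSpace ℝ (Fin p)) (k : ℕ) :
    EuclideanSpace ℝ ((Fin (k - 1) → Fin (p + 1)) × Fin p) :=
  WithLp.toLp 2 (fun c : (Fin (k - 1) → Fin (p + 1)) × Fin p =>
    (∏ s : Fin (k - 1), baru (v (s.val + 1)) (c.1 s)) * v k c.2)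

namespace MeasureTheory.MemLp

variable {Ω : Type*} [MeasurableSpace Ω] {μ : Measure Ω}

lemma integrable_pow_of_le [IsFiniteMeasure μ] {X : Ω → ℝ} {n k : ℕ} (hX : MemLp X n μ)
    (hk : k ≤ n) : Integrable (fun ω => X ω ^ k) μ := by
  refine (integrable_norm_iff (hX.1.pow k)).mp ?_
  simpa only [Pi.pow_apply, norm_pow] using
    (hX.mono_exponent (by exact_mod_cast hk)).integrable_norm_pow'

end MeasureTheory.MemLp

section RealMoments

variable {Ω : Type*} [MeasurableSpace Ω] {μ : Measure Ω}

lemma memLp_four_of_lintegral_ne_top {X : Ω → ℝ} (hX : AEStronglyMeasurable X μ)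
    (h : ∫⁻ ω, ENNReal.ofReal (X ω ^ 4) ∂μ ≠ ∞) : MemLp X 4 μ := by
  refine ⟨hX, ?_⟩
  rw [eLpNorm_lt_top_iff_lintegral_rpow_enorm_lt_top (by norm_num) (by norm_num)]
  convert h.lt_top using 3 with ω
  rw [Real.enorm_eq_ofReal_abs, show ENNReal.toReal 4 = ((4 : ℕ) : ℝ) by norm_num,
    ENNReal.rpow_natCast, ← ENNReal.ofReal_pow (abs_nonneg _), Even.pow_abs (by decide)]

lemma integral_le_of_lintegral_ofReal_le {f : Ω → ℝ} (hf0 : 0 ≤ f)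
    (hf : AEStronglyMeasurable f μ) {C : ℝ} (hC : 0 ≤ C)
    (h : ∫⁻ ω, ENNReal.ofReal (f ω) ∂μ ≠ ∞ → ∫⁻ ω, ENNReal.ofReal (f ω) ∂μ ≤ ENNReal.ofReal C) :
    ∫ ω, f ω ∂μ ≤ C := by
  rw [integral_eq_lintegral_of_nonneg_ae (ae_of_all _ hf0) hf]
  by_cases hfin : ∫⁻ ω, ENNReal.ofReal (f ω) ∂μ = ∞
  · simpa [hfin] using hC
  exact ENNReal.toReal_le_of_le_ofReal hC (h hfin)

variable [IsProbabilityMeasure μ]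

lemma integral_add_const_pow {X : Ω → ℝ} {n : ℕ} (hX : MemLp X n μ) (a : ℝ) :
    ∫ ω, (X ω + a) ^ n ∂μ =
      ∑ k ∈ Finset.range (n + 1), (∫ ω, X ω ^ k ∂μ) * a ^ (n - k) * n.choose k := by
  simp_rw [add_pow, ← integral_mul_const]
  exact integral_finsetSum _ fun k hk =>
    ((hX.integrable_pow_of_le (Finset.mem_range_succ_iff.mp hk)).mul_const _).mul_const _

lemma sq_integral_sq_le_integral_pow_four {X : Ω → ℝ} (hX : MemLp X 4 μ) :
    (∫ ω, X ω ^ 2 ∂μ) ^ 2 ≤ ∫ ω, X ω ^ 4 ∂μ := by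
  have h4 : Integrable (fun ω => (X ω ^ 2) ^ 2) μ := by
    simpa only [← pow_mul] using hX.integrable_pow_of_le le_rfl
  simpa only [← pow_mul] using (convexOn_pow 2).map_integral_le (continuous_pow 2).continuousOn
    isClosed_Ici (ae_of_all _ fun ω => sq_nonneg (X ω)) (hX.integrable_pow_of_le (by norm_num)) h4

lemma memLp_four_of_lintegral_add_const_ne_top {T : Ω → ℝ} (hT : AEStronglyMeasurable T μ)
    {a : ℝ} (hfin : ∫⁻ ω, ENNReal.ofReal ((T ω + a) ^ 4) ∂μ ≠ ∞) : MemLp T 4 μ := by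
  simpa using (memLp_four_of_lintegral_ne_top (hT.add aestronglyMeasurable_const) hfin).sub
    (memLp_const a)

lemma lintegral_ofReal_add_const_pow_four {T : Ω → ℝ} (hT : MemLp T 4 μ) (a : ℝ) :
    ∫⁻ ω, ENNReal.ofReal ((T ω + a) ^ 4) ∂μ = ENNReal.ofReal (∫ ω, (T ω + a) ^ 4 ∂μ) :=
  (ofReal_integral_eq_lintegral_ofReal
    ((hT.add (memLp_const a)).integrable_pow_of_le le_rfl)
    (ae_of_all _ fun _ => Even.pow_nonneg (by decide) _)).symm

lemma ofReal_sq_le_lintegral_add_const_pow_four {T : Ω → ℝ} (hT : AEStronglyMeasurable T μ)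
    (h1 : ∫ ω, T ω ∂μ = 0) (a : ℝ) :
    ENNReal.ofReal ((∫ ω, T ω ^ 2 ∂μ + a ^ 2) ^ 2) ≤
      ∫⁻ ω, ENNReal.ofReal ((T ω + a) ^ 4) ∂μ := by
  by_cases hfin : ∫⁻ ω, ENNReal.ofReal ((T ω + a) ^ 4) ∂μ = ∞
  · simp [hfin]
  have hT4 := memLp_four_of_lintegral_add_const_ne_top hT hfin
  have h2 : ∫ ω, (T ω + a) ^ 2 ∂μ = ∫ ω, T ω ^ 2 ∂μ + a ^ 2 := by
    rw [integral_add_const_pow (hT4.mono_exponent (by norm_num)) a]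
    simp [Finset.sum_range_succ, h1, add_comm]
  rw [lintegral_ofReal_add_const_pow_four hT4, ← h2]
  exact ENNReal.ofReal_le_ofReal
    (sq_integral_sq_le_integral_pow_four (hT4.add (memLp_const a)))

lemma lintegral_add_const_pow_four_le {T : Ω → ℝ} (hT : AEStronglyMeasurable T μ)
    (h1 : ∫ ω, T ω ∂μ = 0) (h3 : ∫ ω, T ω ^ 3 ∂μ = 0) {γ : ℝ}
    (h4 : ∫ ω, T ω ^ 4 ∂μ ≤ γ * (∫ ω, T ω ^ 2 ∂μ) ^ 2) (a : ℝ)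
    (hfin : ∫⁻ ω, ENNReal.ofReal ((T ω + a) ^ 4) ∂μ ≠ ∞) :
    ∫⁻ ω, ENNReal.ofReal ((T ω + a) ^ 4) ∂μ ≤
      ENNReal.ofReal (max 3 γ * (∫ ω, T ω ^ 2 ∂μ + a ^ 2) ^ 2) := by
  have hT4 := memLp_four_of_lintegral_add_const_ne_top hT hfin
  set σ := ∫ ω, T ω ^ 2 ∂μ
  have hσ : 0 ≤ σ := integral_nonneg fun ω => sq_nonneg (T ω)
  have hexp : ∫ ω, (T ω + a) ^ 4 ∂μ = a ^ 4 + 6 * a ^ 2 * σ + ∫ ω, T ω ^ 4 ∂μ := by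
    rw [integral_add_const_pow hT4]
    simp [Finset.sum_range_succ, h1, h3, Nat.choose]
    ring
  rw [lintegral_ofReal_add_const_pow_four hT4, hexp]
  refine ENNReal.ofReal_le_ofReal ?_
  have h3M : 3 ≤ max 3 γ := le_max_left 3 γ
  have hγM : γ * σ ^ 2 ≤ max 3 γ * σ ^ 2 := by gcongr; exact le_max_right 3 γ
  nlinarith [mul_le_mul_of_nonneg_right h3M (mul_nonneg hσ (sq_nonneg a)),
    mul_le_mul_of_nonneg_right (h3M.trans' (by norm_num) : 1 ≤ max 3 γ)
      (pow_nonneg (sq_nonneg a) 2)]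

end RealMoments

section Isotropic

variable {Ω : Type*} [MeasurableSpace Ω] {μ : Measure Ω} [IsProbabilityMeasure μ] {p : ℕ}
  {u : Ω → EuclideanSpace ℝ (Fin p)}

lemma Isotropic.integrable (hu : Measurable u) (hiso : Isotropic u μ) : Integrable u μ := by
  have hcoord : ∀ i, Integrable (fun ω => ⟪u ω, EuclideanSpace.single i 1⟫ ^ 2) μ := fun i =>
    Integrable.of_integral_ne_zero (by rw [hiso]; simp)
  refine (memLp_two_iff_integrable_sq_norm hu.aestronglyMeasurable).mpr ?_ |>.integrable one_le_two
  simp_rw [EuclideanSpace.norm_sq_eq]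
  refine integrable_finsetSum _ fun i _ => ?_
  simpa [EuclideanSpace.inner_single_right] using hcoord i

lemma Isotropic.integral_inner_eq_zero (hiso : Isotropic u μ) (hu : Measurable u)
    (hmean : ∫ ω, u ω ∂μ = 0) (t : EuclideanSpace ℝ (Fin p)) : ∫ ω, ⟪u ω, t⟫ ∂μ = 0 := by
  simp_rw [real_inner_comm t]
  rw [integral_inner (hiso.integrable hu), hmean, inner_zero_right]

end Isotropic

lemma measurable_baru {p : ℕ} : Measurable (baru : EuclideanSpace ℝ (Fin p) → Fin (p + 1) → ℝ) := by
  refine measurable_pi_lambda _ fun j => ?_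
  induction j using Fin.cases with
  | zero => exact measurable_const
  | succ i => exact (measurable_pi_apply i).comp (WithLp.measurable_ofLp 2 _)

lemma sum_mul_baru {p : ℕ} (z : Fin (p + 1) → ℝ) (x : EuclideanSpace ℝ (Fin p)) :
    ∑ i, z i * baru x i = ⟪x, WithLp.toLp 2 (Fin.tail z)⟫ + z 0 := by
  simp [Fin.sum_univ_succ, baru, PiLp.inner_apply, Fin.tail, add_comm, mul_comm]

lemma sum_sq_eq_norm_tail_sq_add {p : ℕ} (z : Fin (p + 1) → ℝ) :
    ∑ i, z i ^ 2 = ‖(WithLp.toLp 2 (Fin.tail z) : EuclideanSpace ℝ (Fin p))‖ ^ 2 + z 0 ^ 2 := by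
  simp [Fin.sum_univ_succ, EuclideanSpace.norm_sq_eq, Fin.tail, add_comm]

noncomputable def fourthMoment {ι : Type*} [Fintype ι] (ν : Measure (ι → ℝ)) (z : ι → ℝ) : ℝ≥0∞ :=
  ∫⁻ x, ENNReal.ofReal ((∑ i, z i * x i) ^ 4) ∂ν

section Bar

variable {Ω : Type*} [MeasurableSpace Ω] {μ : Measure Ω} {p : ℕ} {u : Ω → EuclideanSpace ℝ (Fin p)}

lemma fourthMoment_map_baru (hu : Measurable u) (z : Fin (p + 1) → ℝ) :
    fourthMoment (μ.map fun ω => baru (u ω)) z =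
      ∫⁻ ω, ENNReal.ofReal ((∑ i, z i * baru (u ω) i) ^ 4) ∂μ :=
  lintegral_map (by fun_prop) (measurable_baru.comp hu)

variable [IsProbabilityMeasure μ]

lemma ofReal_sq_le_fourthMoment_map_baru (hu : Measurable u) (hiso : Isotropic u μ)
    (hmean : ∫ ω, u ω ∂μ = 0) (z : Fin (p + 1) → ℝ) :
    ENNReal.ofReal ((∑ i, z i ^ 2) ^ 2) ≤ fourthMoment (μ.map fun ω => baru (u ω)) z := by
  rw [fourthMoment_map_baru hu]
  simp_rw [sum_mul_baru]
  rw [sum_sq_eq_norm_tail_sq_add, ← hiso]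
  exact ofReal_sq_le_lintegral_add_const_pow_four (hu.inner measurable_const).aestronglyMeasurable
    (hiso.integral_inner_eq_zero hu hmean _) _

lemma fourthMoment_map_baru_le (hu : Measurable u) (hiso : Isotropic u μ)
    (hmean : ∫ ω, u ω ∂μ = 0) {γ : ℝ} (hhyp : Hypercontractive γ u μ)
    (hthird : ZeroThirdMoment u μ) (z : Fin (p + 1) → ℝ)
    (hfin : fourthMoment (μ.map fun ω => baru (u ω)) z ≠ ∞) :
    fourthMoment (μ.map fun ω => baru (u ω)) z ≤ ENNReal.ofReal (max 3 γ * (∑ i, z i ^ 2) ^ 2) := by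
  rw [fourthMoment_map_baru hu] at hfin ⊢
  simp_rw [sum_mul_baru] at hfin ⊢
  rw [sum_sq_eq_norm_tail_sq_add, ← hiso]
  exact lintegral_add_const_pow_four_le (hu.inner measurable_const).aestronglyMeasurable
    (hiso.integral_inner_eq_zero hu hmean _) (hthird _) (hhyp _) _ hfin

end Bar

section Minkowski

variable {Y : Type*} [MeasurableSpace Y] {ρ : Measure Y}

lemma eLpNorm_two_le_ofReal_iff {f : Y → ℝ} {c : ℝ} (hc : 0 ≤ c) :
    eLpNorm f 2 ρ ≤ ENNReal.ofReal c ↔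
      ∫⁻ y, ENNReal.ofReal (f y ^ 2) ∂ρ ≤ ENNReal.ofReal (c ^ 2) := by
  rw [eLpNorm_eq_lintegral_rpow_enorm_toReal two_ne_zero ENNReal.ofNat_ne_top, one_div,
    ENNReal.rpow_inv_le_iff (by norm_num)]
  simp only [ENNReal.toReal_ofNat, ENNReal.rpow_ofNat, Real.enorm_eq_ofReal_abs,
    ← ENNReal.ofReal_pow (abs_nonneg _), sq_abs, ← ENNReal.ofReal_pow hc]

lemma lintegral_sq_finsetSum_le {ι : Type*} {s : Finset ι} {g : ι → Y → ℝ}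
    (hg : ∀ i ∈ s, AEStronglyMeasurable (g i) ρ) {c : ι → ℝ} (hc : ∀ i ∈ s, 0 ≤ c i)
    (hgc : ∀ i ∈ s, ∫⁻ y, ENNReal.ofReal (g i y ^ 2) ∂ρ ≤ ENNReal.ofReal (c i ^ 2)) :
    ∫⁻ y, ENNReal.ofReal ((∑ i ∈ s, g i y) ^ 2) ∂ρ ≤ ENNReal.ofReal ((∑ i ∈ s, c i) ^ 2) := by
  have hnorm : eLpNorm (∑ i ∈ s, g i) 2 ρ ≤ ENNReal.ofReal (∑ i ∈ s, c i) := by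
    rw [ENNReal.ofReal_sum_of_nonneg hc]
    exact (eLpNorm_sum_le hg one_le_two).trans
      (Finset.sum_le_sum fun i hi => ((eLpNorm_two_le_ofReal_iff (hc i hi)).mpr (hgc i hi)))
  simpa only [Finset.sum_apply] using
    (eLpNorm_two_le_ofReal_iff (Finset.sum_nonneg hc)).mp hnorm

end Minkowski

lemma lintegral_pi_fin_succ {n : ℕ} {α : Type*} [MeasurableSpace α] (ν : Fin (n + 1) → Measure α)
    [∀ s, SigmaFinite (ν s)] {f : (Fin (n + 1) → α) → ℝ≥0∞} (hf : Measurable f) :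
    ∫⁻ w, f w ∂Measure.pi ν =
      ∫⁻ w, ∫⁻ x, f (Fin.cons x w) ∂ν 0 ∂Measure.pi (fun j => ν j.succ) := by
  have e := (measurePreserving_piFinSuccAbove ν 0).symm
  rw [← e.lintegral_comp hf]
  refine (lintegral_prod_symm (μ := ν 0) (ν := Measure.pi fun j => ν j.succ)
    (f ∘ (MeasurableEquiv.piFinSuccAbove (fun _ => α) 0).symm)
    (hf.comp e.measurable).aemeasurable).trans ?_
  simp only [Function.comp_apply, MeasurableEquiv.piFinSuccAbove_symm_apply,
    Fin.insertNthEquiv_zero]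
  rfl

section Tensor

variable {ι : Type*} [Fintype ι]

noncomputable def tensorForm {n : ℕ} (Q : (Fin n → ι) → ℝ) (w : Fin n → ι → ℝ) : ℝ :=
  ∑ c, Q c * ∏ s, w s (c s)

@[fun_prop]
lemma measurable_tensorForm {n : ℕ} (Q : (Fin n → ι) → ℝ) : Measurable (tensorForm Q) := by
  unfold tensorForm
  fun_prop

lemma sum_fin_succ_pi {n : ℕ} {M : Type*} [AddCommMonoid M] (f : (Fin (n + 1) → ι) → M) :
    ∑ c, f c = ∑ i, ∑ c, f (Fin.cons i c) := by
  rw [← (Fin.consEquiv fun _ => ι).sum_comp, Fintype.sum_prod_type]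
  rfl

lemma tensorForm_succ {n : ℕ} (Q : (Fin (n + 1) → ι) → ℝ) (w : Fin (n + 1) → ι → ℝ) :
    tensorForm Q w = ∑ i, tensorForm (fun c => Q (Fin.cons i c)) (Fin.tail w) * w 0 i := by
  simp only [tensorForm, sum_fin_succ_pi, Fin.prod_univ_succ, Fin.cons_zero, Fin.cons_succ,
    Finset.sum_mul, Fin.tail]
  exact Finset.sum_congr rfl fun i _ => Finset.sum_congr rfl fun c _ => by ring

lemma lintegral_fourthMoment_le {Y : Type*} [MeasurableSpace Y] {ρ : Measure Y}
    {ν : Measure (ι → ℝ)} [SFinite ν] {M : ℝ} (hM : 0 ≤ M)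
    (hup : ∀ z, fourthMoment ν z ≠ ∞ → fourthMoment ν z ≤ ENNReal.ofReal (M * (∑ i, z i ^ 2) ^ 2))
    {Z : Y → ι → ℝ} (hZ : Measurable Z) (hfin : ∫⁻ y, fourthMoment ν (Z y) ∂ρ ≠ ∞) :
    ∫⁻ y, fourthMoment ν (Z y) ∂ρ ≤
      ENNReal.ofReal M * ∫⁻ y, ENNReal.ofReal ((∑ i, Z y i ^ 2) ^ 2) ∂ρ := by
  have hmeas : Measurable fun y => fourthMoment ν (Z y) := by
    unfold fourthMoment
    exact Measurable.lintegral_prod_right'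
      (f := fun p : Y × (ι → ℝ) => ENNReal.ofReal ((∑ i, Z p.1 i * p.2 i) ^ 4)) (by fun_prop)
  rw [← lintegral_const_mul _ (by fun_prop)]
  refine lintegral_mono_ae ?_
  filter_upwards [ae_lt_top hmeas hfin] with y hy
  rw [← ENNReal.ofReal_mul hM]
  exact hup (Z y) hy.ne

theorem lintegral_tensorForm_pow_four_le {M : ℝ} (hM : 0 ≤ M) {n : ℕ}
    (ν : Fin n → Measure (ι → ℝ)) [∀ s, IsProbabilityMeasure (ν s)]
    (hlow : ∀ s z, ENNReal.ofReal ((∑ i, z i ^ 2) ^ 2) ≤ fourthMoment (ν s) z)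
    (hup : ∀ s z, fourthMoment (ν s) z ≠ ∞ →
      fourthMoment (ν s) z ≤ ENNReal.ofReal (M * (∑ i, z i ^ 2) ^ 2))
    (Q : (Fin n → ι) → ℝ) (hfin : ∫⁻ w, ENNReal.ofReal (tensorForm Q w ^ 4) ∂Measure.pi ν ≠ ∞) :
    ∫⁻ w, ENNReal.ofReal (tensorForm Q w ^ 4) ∂Measure.pi ν ≤
      ENNReal.ofReal (M ^ n * (∑ c, Q c ^ 2) ^ 2) := by
  induction n with
  | zero =>
    simp [tensorForm, ← pow_mul]
  | succ n ih =>
    set ρ := Measure.pi fun j : Fin n => ν j.succ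
    set Z : (Fin n → ι → ℝ) → ι → ℝ := fun w i => tensorForm (fun c => Q (Fin.cons i c)) w
    have hZ : Measurable Z := measurable_pi_lambda _ fun i => measurable_tensorForm _
    have hsplit : ∫⁻ w, ENNReal.ofReal (tensorForm Q w ^ 4) ∂Measure.pi ν =
        ∫⁻ w, fourthMoment (ν 0) (Z w) ∂ρ := by
      rw [lintegral_pi_fin_succ ν ((measurable_tensorForm Q).pow_const 4).ennreal_ofReal]
      simp only [tensorForm_succ, Fin.tail_cons, Fin.cons_zero, fourthMoment, Z]
      rfl
    rw [hsplit] at hfin ⊢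
    set J := ∫⁻ w, ENNReal.ofReal ((∑ i, Z w i ^ 2) ^ 2) ∂ρ
    have hJfin : J ≠ ∞ := ne_top_of_le_ne_top hfin (lintegral_mono fun w => hlow 0 (Z w))
    have hslice : ∀ i, ∫⁻ w, ENNReal.ofReal ((Z w i ^ 2) ^ 2) ∂ρ ≤
        ENNReal.ofReal ((√(M ^ n) * ∑ c, Q (Fin.cons i c) ^ 2) ^ 2) := by
      intro i
      have hle : ∫⁻ w, ENNReal.ofReal ((Z w i ^ 2) ^ 2) ∂ρ ≤ J :=
        lintegral_mono fun w => ENNReal.ofReal_le_ofReal (pow_le_pow_left₀ (sq_nonneg _)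
          (Finset.single_le_sum (f := fun j => Z w j ^ 2) (fun j _ => sq_nonneg _)
            (Finset.mem_univ i)) 2)
      simp only [← pow_mul, Nat.reduceMul, mul_pow, Real.sq_sqrt (pow_nonneg hM n)] at hle ⊢
      exact ih _ (fun s => hlow s.succ) (fun s => hup s.succ) _ (ne_top_of_le_ne_top hJfin hle)
    have hJ : J ≤ ENNReal.ofReal (M ^ n * (∑ c, Q c ^ 2) ^ 2) := by
      have := lintegral_sq_finsetSum_le (s := Finset.univ) (g := fun i w => Z w i ^ 2)
        (fun i _ => by fun_prop) (fun i _ => by positivity) (fun i _ => hslice i)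
      rwa [← Finset.mul_sum, ← sum_fin_succ_pi (fun c => Q c ^ 2), mul_pow,
        Real.sq_sqrt (pow_nonneg hM n)] at this
    calc ∫⁻ w, fourthMoment (ν 0) (Z w) ∂ρ ≤ ENNReal.ofReal M * J :=
          lintegral_fourthMoment_le hM (hup 0) hZ hfin
      _ ≤ ENNReal.ofReal M * ENNReal.ofReal (M ^ n * (∑ c, Q c ^ 2) ^ 2) := by gcongr
      _ = ENNReal.ofReal (M ^ (n + 1) * (∑ c, Q c ^ 2) ^ 2) := by
          rw [← ENNReal.ofReal_mul hM]
          ring_nf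

end Tensor

section Block

variable {p m : ℕ}

noncomputable def padCoeff (q : (Fin m → Fin (p + 1)) × Fin p → ℝ)
    (c : Fin (m + 1) → Fin (p + 1)) : ℝ :=
  Fin.cases 0 (fun j => q (Fin.init c, j)) (c (Fin.last m))

lemma sum_padCoeff_mul (q : (Fin m → Fin (p + 1)) × Fin p → ℝ)
    (f : (Fin (m + 1) → Fin (p + 1)) → ℝ) :
    ∑ c, padCoeff q c * f c = ∑ d, q d * f (Fin.snoc d.1 d.2.succ) := by
  rw [← (Fin.snocEquiv fun _ => Fin (p + 1)).sum_comp, Fintype.sum_prod_type, Finset.sum_comm,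
    Fintype.sum_prod_type]
  simp [Fin.sum_univ_succ, padCoeff, Fin.snocEquiv]

lemma sum_padCoeff_sq (q : (Fin m → Fin (p + 1)) × Fin p → ℝ) :
    ∑ c, padCoeff q c ^ 2 = ∑ d, q d ^ 2 := by
  simp only [sq, sum_padCoeff_mul]
  simp [padCoeff]

lemma inner_blockVec_eq_tensorForm (q : EuclideanSpace ℝ ((Fin m → Fin (p + 1)) × Fin p))
    (v : ℕ → EuclideanSpace ℝ (Fin p)) :
    ⟪q, blockVec v (m + 1)⟫ = tensorForm (padCoeff q.ofLp) (fun s => baru (v (s + 1))) := by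
  rw [tensorForm, sum_padCoeff_mul]
  simp [PiLp.inner_apply, blockVec, Fin.prod_univ_castSucc, baru, mul_comm]

end Block

section BarTensor

variable {Ω : Type*} [MeasurableSpace Ω] {μ : Measure Ω} [IsProbabilityMeasure μ] {p n : ℕ}

theorem lintegral_tensorForm_baru_pow_four_le {u : Fin n → Ω → EuclideanSpace ℝ (Fin p)}
    (hu : ∀ s, Measurable (u s)) (hindep : iIndepFun u μ) (hmean : ∀ s, ∫ ω, u s ω ∂μ = 0)
    (hiso : ∀ s, Isotropic (u s) μ) {γ : ℝ} (hhyp : ∀ s, Hypercontractive γ (u s) μ)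
    (hthird : ∀ s, ZeroThirdMoment (u s) μ) (Q : (Fin n → Fin (p + 1)) → ℝ)
    (hfin : ∫⁻ ω, ENNReal.ofReal (tensorForm Q (fun s => baru (u s ω)) ^ 4) ∂μ ≠ ∞) :
    ∫⁻ ω, ENNReal.ofReal (tensorForm Q (fun s => baru (u s ω)) ^ 4) ∂μ ≤
      ENNReal.ofReal (max 3 γ ^ n * (∑ c, Q c ^ 2) ^ 2) := by
  have hbar (s : Fin n) : Measurable fun ω => baru (u s ω) := measurable_baru.comp (hu s)
  have (s : Fin n) : IsProbabilityMeasure (μ.map fun ω => baru (u s ω)) :=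
    Measure.isProbabilityMeasure_map (hbar s).aemeasurable
  have hlaw : μ.map (fun ω s => baru (u s ω)) = Measure.pi fun s => μ.map fun ω => baru (u s ω) :=
    (iIndepFun_iff_map_fun_eq_pi_map fun s => (hbar s).aemeasurable).mp
      (hindep.comp (fun _ => baru) fun _ => measurable_baru)
  have hw : Measurable fun ω s => baru (u s ω) := measurable_pi_lambda _ hbar
  have hbound := lintegral_tensorForm_pow_four_le (zero_le_three.trans (le_max_left 3 γ)) _
    (fun s => ofReal_sq_le_fourthMoment_map_baru (hu s) (hiso s) (hmean s))
    (fun s => fourthMoment_map_baru_le (hu s) (hiso s) (hmean s) (hhyp s) (hthird s)) Q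
  rw [← hlaw, lintegral_map (by fun_prop) hw] at hbound
  exact hbound hfin

end BarTensor

theorem block_fourth_moment_general {Ω : Type*} [MeasurableSpace Ω]
    (μ : Measure Ω) [IsProbabilityMeasure μ]
    (p k : ℕ) (hk : 1 ≤ k) (γ : ℝ)
    (v : ℕ → Ω → EuclideanSpace ℝ (Fin p))
    (hmeas : ∀ s, 1 ≤ s → s ≤ k → Measurable (v s))
    (hindep : iIndepFun (m := fun _ : Fin k =>
      (inferInstance : MeasurableSpace (EuclideanSpace ℝ (Fin p))))
      (fun s : Fin k => v (s.val + 1)) μ)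
    (hmean : ∀ s, 1 ≤ s → s ≤ k → (∫ ω, v s ω ∂μ) = 0)
    (hiso : ∀ s, 1 ≤ s → s ≤ k → Isotropic (v s) μ)
    (hhyp : ∀ s, 1 ≤ s → s ≤ k → Hypercontractive γ (v s) μ)
    (hthird : ∀ s, 1 ≤ s → s ≤ k → ZeroThirdMoment (v s) μ)
    (q : EuclideanSpace ℝ ((Fin (k - 1) → Fin (p + 1)) × Fin p)) :
    (∫ ω, ⟪q, blockVec (fun s => v s ω) k⟫ ^ 4 ∂μ) ≤ (max 3 γ) ^ k * ‖q‖ ^ 4 := by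
  obtain ⟨m, rfl⟩ : ∃ m, k = m + 1 := ⟨k - 1, by omega⟩
  have hs (s : Fin (m + 1)) : 1 ≤ (s : ℕ) + 1 ∧ (s : ℕ) + 1 ≤ m + 1 := by omega
  have hv (s : Fin (m + 1)) : Measurable (v (s + 1)) := hmeas _ (hs s).1 (hs s).2
  have hbound := lintegral_tensorForm_baru_pow_four_le hv hindep
    (fun s => hmean _ (hs s).1 (hs s).2) (fun s => hiso _ (hs s).1 (hs s).2)
    (fun s => hhyp _ (hs s).1 (hs s).2) (fun s => hthird _ (hs s).1 (hs s).2) (padCoeff q.ofLp)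
  have hblock (ω : Ω) : ⟪q, blockVec (fun s => v s ω) (m + 1)⟫ =
      tensorForm (padCoeff q.ofLp) fun s => baru (v (s + 1) ω) :=
    inner_blockVec_eq_tensorForm (m := m) q _
  have hnorm : (∑ c, padCoeff q.ofLp c ^ 2) ^ 2 = ‖q‖ ^ 4 := by
    rw [sum_padCoeff_sq, show ‖q‖ ^ 4 = (‖q‖ ^ 2) ^ 2 by ring, EuclideanSpace.norm_sq_eq]
    simp
  simp_rw [hblock, ← hnorm]
  have hmeas_block : Measurable fun ω => tensorForm (padCoeff q.ofLp) fun s => baru (v (s + 1) ω) :=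
    (measurable_tensorForm _).comp (measurable_pi_lambda _ fun s => measurable_baru.comp (hv s))
  exact integral_le_of_lintegral_ofReal_le (fun ω => by positivity)
    (hmeas_block.pow_const 4).aestronglyMeasurable (by positivity) hbound

/-- fourth moment of a block: for independent zero-mean, isotropic,
`(4,2,γ)`-hypercontractive vectors with zero third moment marginals,
`E[(qᵀb_k)⁴] ≤ (max 3 γ)^k ‖q‖⁴`. -/
theorem block_fourth_moment {Ω : Type*} [MeasurableSpace Ω]
    (μ : Measure Ω) [IsProbabilityMeasure μ]
    (p k : ℕ) (hp : 1 ≤ p) (hk : 1 ≤ k) (γ : ℝ) (hγ : 0 < γ)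
    (v : ℕ → Ω → EuclideanSpace ℝ (Fin p))
    (hmeas : ∀ s, 1 ≤ s → s ≤ k → Measurable (v s))
    (hindep : iIndepFun (m := fun _ : Fin k =>
      (inferInstance : MeasurableSpace (EuclideanSpace ℝ (Fin p))))
      (fun s : Fin k => v (s.val + 1)) μ)
    (hmean : ∀ s, 1 ≤ s → s ≤ k → (∫ ω, v s ω ∂μ) = 0)
    (hiso : ∀ s, 1 ≤ s → s ≤ k → Isotropic (v s) μ)
    (hhyp : ∀ s, 1 ≤ s → s ≤ k → Hypercontractive γ (v s) μ)
    (hthird : ∀ s, 1 ≤ s → s ≤ k → ZeroThirdMoment (v s) μ)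
    (q : EuclideanSpace ℝ ((Fin (k - 1) → Fin (p + 1)) × Fin p)) :
    (∫ ω, ⟪q, blockVec (fun s => v s ω) k⟫ ^ 4 ∂μ) ≤ (max 3 γ) ^ k * ‖q‖ ^ 4 :=
  block_fourth_moment_general μ p k hk γ v hmeas hindep hmean hiso hhyp hthird q
end
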